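/- If G and H are graphs without isolated vertices satisfying γ_pr(G) = 2ρ_3(G) and γ_pr(H) = 2ρ_3(H), then γ_pr(G × H) ≥ (1/2)·γ_pr(G)·γ_pr(H). -/

import Mathlib

set_option linter.unusedVariables false
set_option linter.unnecessarySeqFocus false

open SimpleGraph

variable {V : Type*} {W : Type*}

/-- The direct (tensor) product of two simple graphs. -/
def SimpleGraph.tensor (G : SimpleGraph V) (H : SimpleGraph W) : SimpleGraph (V × W) where
  Adj p q := G.Adj p.1 q.1 ∧ H.Adj p.2 q.2
  symm := ⟨fun p q h => ⟨h.1.symm, h.2.symm⟩⟩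
  loopless := ⟨fun p h => G.irrefl h.1⟩

/-- A dominating set: every vertex is in `D` or adjacent to a member of `D`. -/
def SimpleGraph.Dominating (G : SimpleGraph V) (D : Set V) : Prop :=
  ∀ v, ∃ u ∈ D, u = v ∨ G.Adj u v

/-- The domination number. -/
noncomputable def SimpleGraph.domNum (G : SimpleGraph V) : ℕ :=
  sInf {n | ∃ D : Set V, G.Dominating D ∧ D.ncard = n}

/-- A total dominating set. -/
def SimpleGraph.TotalDominating (G : SimpleGraph V) (D : Set V) : Prop :=
  ∀ v, ∃ u ∈ D, G.Adj u v

/-- The total domination number. -/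
noncomputable def SimpleGraph.totalDomNum (G : SimpleGraph V) : ℕ :=
  sInf {n | ∃ D : Set V, G.TotalDominating D ∧ D.ncard = n}

/-- A paired dominating set: dominating and the induced subgraph has a perfect matching. -/
def SimpleGraph.PairedDominating (G : SimpleGraph V) (D : Set V) : Prop :=
  G.Dominating D ∧ ∃ M : (G.induce D).Subgraph, M.IsPerfectMatching

/-- The paired domination number. -/
noncomputable def SimpleGraph.pairedDomNum (G : SimpleGraph V) : ℕ :=
  sInf {n | ∃ D : Set V, G.PairedDominating D ∧ D.ncard = n}

/-- A 3-packing: vertices pairwise at distance greater than 3. -/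
def SimpleGraph.Packing3 (G : SimpleGraph V) (P : Set V) : Prop :=
  P.Pairwise fun u v => ¬G.Reachable u v ∨ 3 < G.dist u v

/-- The 3-packing number. -/
noncomputable def SimpleGraph.packNum3 (G : SimpleGraph V) : ℕ :=
  sSup {n | ∃ P : Set V, G.Packing3 P ∧ P.ncard = n}

/-- A minimal dominating set. -/
def SimpleGraph.MinimalDominating (G : SimpleGraph V) (D : Set V) : Prop :=
  G.Dominating D ∧ ∀ D' ⊆ D, G.Dominating D' → D' = D

/-- The upper domination number. -/
noncomputable def SimpleGraph.upperDomNum (G : SimpleGraph V) : ℕ :=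
  sSup {n | ∃ D : Set V, G.MinimalDominating D ∧ D.ncard = n}

/-- `G` has no isolated vertices. -/
def SimpleGraph.NoIsolated (G : SimpleGraph V) : Prop := ∀ v, ∃ u, G.Adj u v

/-- Direct product of complete graphs `K_{n 0} × ... × K_{n (t-1)}`:
tuples adjacent iff they differ in every coordinate. -/
def prodCompleteGraphs {t : ℕ} (n : Fin t → ℕ) : SimpleGraph (∀ i, Fin (n i)) where
  Adj a b := a ≠ b ∧ ∀ i, a i ≠ b i
  symm := ⟨fun a b h => ⟨h.1.symm, fun i => (h.2 i).symm⟩⟩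
  loopless := ⟨fun a h => h.1 rfl⟩

/-- `G` together with a new pendant vertex (`none`) attached to `v`. -/
def addPendant (G : SimpleGraph V) (v : V) : SimpleGraph (Option V) where
  Adj x y :=
    match x, y with
    | some a, some b => G.Adj a b
    | some a, none => a = v
    | none, some b => b = v
    | none, none => False
  symm := by
    constructor
    rintro (_ | a) (_ | b) h <;> simp_all [SimpleGraph.adj_comm]
  loopless := by
    constructor
    rintro (_ | a) h <;> simp_all

/-- `G` with a path on `ℓ` vertices appended to vertex `u` via a bridge. -/
def appendPath (G : SimpleGraph V) (u : V) (ℓ : ℕ) : SimpleGraph (V ⊕ Fin ℓ) where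
  Adj x y :=
    match x, y with
    | Sum.inl a, Sum.inl b => G.Adj a b
    | Sum.inl a, Sum.inr j => a = u ∧ (j : ℕ) = 0
    | Sum.inr i, Sum.inl b => b = u ∧ (i : ℕ) = 0
    | Sum.inr i, Sum.inr j => (i : ℕ) + 1 = j ∨ (j : ℕ) + 1 = i
  symm := by
    constructor
    rintro (a | i) (b | j) h <;> simp_all [SimpleGraph.adj_comm] <;> tauto
  loopless := by
    constructor
    rintro (a | i) h <;> simp_all

/-- `G` with a pendant path on two vertices `(v,1)–(v,2)` attached to each vertex `(v,0)`. -/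
def attachPaths2 (G : SimpleGraph V) : SimpleGraph (V × Fin 3) where
  Adj p q :=
    (p.2 = 0 ∧ q.2 = 0 ∧ G.Adj p.1 q.1) ∨
    (p.1 = q.1 ∧ ((p.2 = 0 ∧ q.2 = 1) ∨ (p.2 = 1 ∧ q.2 = 0) ∨
      (p.2 = 1 ∧ q.2 = 2) ∨ (p.2 = 2 ∧ q.2 = 1)))
  symm := by
    constructor
    rintro ⟨a, i⟩ ⟨b, j⟩ h <;> simp_all [SimpleGraph.adj_comm] <;> tauto
  loopless := by
    constructor
    rintro ⟨a, i⟩ h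
    rcases h with ⟨-, -, h⟩ | ⟨-, h⟩
    · exact G.irrefl h
    · rcases h with ⟨h1, h2⟩ | ⟨h1, h2⟩ | ⟨h1, h2⟩ | ⟨h1, h2⟩ <;> simp_all

/-!
A paired dominating set `D` of `L` splits into matched pairs. Each vertex `p` of a 3-packing `P` is
dominated by some `u p ∈ D`; since the vertices of `P` are pairwise more than three apart, the
vertices `u p` and their partners are `2 |P|` distinct elements of `D`, so `γ_pr(L) ≥ 2 ρ₃(L)`.
The product `P × Q` of 3-packings of `G` and `H` is a 3-packing of `G × H`, because both
projections are graph homomorphisms and hence do not increase distances. Hence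
`γ_pr(G) γ_pr(H) = 4 ρ₃(G) ρ₃(H) ≤ 4 ρ₃(G × H) ≤ 2 γ_pr(G × H)`.
-/

namespace SimpleGraph

section

variable {G : SimpleGraph V} {H : SimpleGraph W}

lemma Hom.edist_le {G' : SimpleGraph W} (f : G →g G') (u v : V) :
    G'.edist (f u) (f v) ≤ G.edist u v := by
  by_cases h : G.Reachable u v
  · obtain ⟨w, hw⟩ := h.exists_walk_length_eq_edist
    simpa [hw] using SimpleGraph.edist_le (w.map f)
  · rw [edist_eq_top_of_not_reachable h]
    exact le_top

lemma packing3_iff_edist {P : Set V} :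
    G.Packing3 P ↔ P.Pairwise fun u v => 3 < G.edist u v := by
  refine forall₂_congr fun u _ => forall₂_congr fun v _ => forall_congr' fun _ => ?_
  by_cases h : G.Reachable u v
  · simp [h, ← h.coe_dist_eq_edist]
  · simpa [h, edist_eq_top_of_not_reachable h] using ENat.natCast_lt_top 3

lemma Packing3.eq_of_edist_le_three {P : Set V} (hP : G.Packing3 P) {p q : V} (hp : p ∈ P)
    (hq : q ∈ P) (h : G.edist p q ≤ 3) : p = q := by
  by_contra hne
  exact (packing3_iff_edist.1 hP hp hq hne).not_ge h

def tensorFst (G : SimpleGraph V) (H : SimpleGraph W) : G.tensor H →g G := ⟨Prod.fst, And.left⟩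

def tensorSnd (G : SimpleGraph V) (H : SimpleGraph W) : G.tensor H →g H := ⟨Prod.snd, And.right⟩

lemma Packing3.prod {P : Set V} {Q : Set W} (hP : G.Packing3 P) (hQ : H.Packing3 Q) :
    (G.tensor H).Packing3 (P ×ˢ Q) := by
  rw [packing3_iff_edist] at *
  rintro ⟨a, b⟩ ⟨ha, hb⟩ ⟨a', b'⟩ ⟨ha', hb'⟩ hne
  by_cases h : a = a'
  · have hbb' : b ≠ b' := fun h' => hne (by rw [h, h'])
    exact (hQ hb hb' hbb').trans_le ((tensorSnd G H).edist_le _ _)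
  · exact (hP ha ha' h).trans_le ((tensorFst G H).edist_le _ _)

lemma NoIsolated.tensor (hG : G.NoIsolated) (hH : H.NoIsolated) : (G.tensor H).NoIsolated :=
  fun ⟨v, w⟩ =>
    let ⟨u, hu⟩ := hG v
    let ⟨x, hx⟩ := hH w
    ⟨(u, x), hu, hx⟩

lemma Subgraph.IsMatching.exists_isPerfectMatching_induce {M : G.Subgraph} (hM : M.IsMatching) :
    ∃ M' : (G.induce M.verts).Subgraph, M'.IsPerfectMatching := by
  refine ⟨M.comap (Embedding.induce M.verts).toHom, Subgraph.isPerfectMatching_iff.2 fun x => ?_⟩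
  obtain ⟨y, hxy, huniq⟩ := hM x.2
  exact ⟨⟨y, M.edge_vert hxy.symm⟩, ⟨hxy.adj_sub, hxy⟩, fun z hz => Subtype.ext (huniq _ hz.2)⟩

lemma NoIsolated.exists_pairedDominating [Finite V] (hG : G.NoIsolated) :
    ∃ D, G.PairedDominating D := by
  obtain ⟨M, hM, hmax⟩ := Set.exists_max_image {M : G.Subgraph | M.IsMatching}
    (fun M => M.verts.ncard) (Set.toFinite _) ⟨⊥, fun v hv => absurd hv (by simp)⟩
  refine ⟨M.verts, fun v => ?_, hM.exists_isPerfectMatching_induce⟩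
  by_cases hv : v ∈ M.verts
  · exact ⟨v, hv, .inl rfl⟩
  obtain ⟨w, hw⟩ := hG v
  by_cases hw' : w ∈ M.verts
  · exact ⟨w, hw', .inr hw⟩
  -- otherwise the edge `wv` would extend the maximum matching `M`
  have hdisj : Disjoint M.support (G.subgraphOfAdj hw).support := by
    rw [hM.support_eq_verts, support_subgraphOfAdj, Set.disjoint_right]
    rintro x (rfl | rfl) <;> assumption
  have hlt : M.verts ⊂ (M ⊔ G.subgraphOfAdj hw).verts :=
    (Set.ssubset_iff_of_subset le_sup_left).2 ⟨v, by simp, hv⟩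
  exact absurd (hmax _ (hM.sup (.subgraphOfAdj hw) hdisj)) (Set.ncard_lt_ncard hlt).not_ge

lemma PairedDominating.exists_partner {D : Set V} (hD : G.PairedDominating D) :
    ∃ m : V → V, ∀ x ∈ D, m x ∈ D ∧ G.Adj x (m x) ∧ m (m x) = x := by
  classical
  obtain ⟨-, M, hM⟩ := hD
  choose m hm hm_unique using Subgraph.isPerfectMatching_iff.1 hM
  refine ⟨fun x => if hx : x ∈ D then m ⟨x, hx⟩ else x, fun x hx => ?_⟩
  refine ⟨by simp [hx], by simpa [hx] using M.adj_sub (hm ⟨x, hx⟩), ?_⟩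
  simpa [hx] using congrArg Subtype.val (hm_unique _ _ (M.adj_symm (hm ⟨x, hx⟩))).symm

lemma PairedDominating.two_mul_ncard_le [Finite V] {D P : Set V} (hD : G.PairedDominating D)
    (hP : G.Packing3 P) : 2 * P.ncard ≤ D.ncard := by
  obtain ⟨m, hm⟩ := hD.exists_partner
  have hdom : ∀ p, ∃ x ∈ D, G.edist p x ≤ 1 := fun p => by
    obtain ⟨x, hx, h⟩ := hD.1 p
    exact ⟨x, hx, edist_le_one_iff_adj_or_eq.2 (h.symm.imp Adj.symm Eq.symm)⟩
  choose u huD hu using hdom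
  have hu_inj : Set.InjOn u P := fun p hp q hq h => hP.eq_of_edist_le_three hp hq <| calc
    G.edist p q ≤ G.edist p (u p) + G.edist (u q) q := h ▸ G.edist_triangle
    _ ≤ 1 + 1 := add_le_add (hu p) (edist_comm ▸ hu q)
    _ ≤ 3 := by norm_num
  have hu_ne_partner : ∀ p ∈ P, ∀ q ∈ P, u p ≠ m (u q) := by
    intro p hp q hq h
    have hadj := (hm _ (huD q)).2.1
    obtain rfl : p = q := hP.eq_of_edist_le_three hp hq <| calc
      G.edist p q ≤ G.edist p (u p) + G.edist (u p) (u q) + G.edist (u q) q :=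
        G.edist_triangle.trans (by gcongr; exact G.edist_triangle)
      _ ≤ 1 + 1 + 1 := by
        gcongr
        · exact hu p
        · exact h ▸ (edist_le_one_iff_adj_or_eq.2 (.inl hadj.symm))
        · exact edist_comm ▸ hu q
      _ = 3 := by norm_num
    exact hadj.ne h
  set S := u '' P
  have hSD : S ⊆ D := Set.image_subset_iff.2 fun p _ => huD p
  have hm_inj : Set.InjOn m S := Set.LeftInvOn.injOn fun x hx => (hm x (hSD hx)).2.2
  have hdisj : Disjoint S (m '' S) := by
    rw [Set.disjoint_right]
    rintro _ ⟨_, ⟨q, hq, rfl⟩, rfl⟩ ⟨p, hp, hpq⟩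
    exact hu_ne_partner p hp q hq hpq
  calc 2 * P.ncard = S.ncard + (m '' S).ncard := by
        rw [hm_inj.ncard_image, hu_inj.ncard_image]; ring
    _ = (S ∪ m '' S).ncard := (Set.ncard_union_eq hdisj).symm
    _ ≤ D.ncard := Set.ncard_le_ncard (Set.union_subset hSD
        (Set.image_subset_iff.2 fun x hx => (hm x (hSD hx)).1))

lemma bddAbove_ncard_packing3 [Finite V] (G : SimpleGraph V) :
    BddAbove {n | ∃ P : Set V, G.Packing3 P ∧ P.ncard = n} := by
  refine ⟨Nat.card V, ?_⟩
  rintro _ ⟨P, -, rfl⟩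
  exact P.ncard_le_card

lemma exists_packing3_ncard_eq_packNum3 [Finite V] (G : SimpleGraph V) :
    ∃ P, G.Packing3 P ∧ P.ncard = G.packNum3 :=
  Nat.sSup_mem (s := {n | ∃ P, G.Packing3 P ∧ P.ncard = n})
    ⟨0, ∅, Set.pairwise_empty _, Set.ncard_empty _⟩ G.bddAbove_ncard_packing3

lemma Packing3.ncard_le_packNum3 [Finite V] {P : Set V} (hP : G.Packing3 P) :
    P.ncard ≤ G.packNum3 :=
  le_csSup G.bddAbove_ncard_packing3 ⟨P, hP, rfl⟩

lemma NoIsolated.exists_pairedDominating_ncard_eq [Finite V] (hG : G.NoIsolated) :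
    ∃ D, G.PairedDominating D ∧ D.ncard = G.pairedDomNum := by
  obtain ⟨D, hD⟩ := hG.exists_pairedDominating
  exact Nat.sInf_mem (s := {n | ∃ D, G.PairedDominating D ∧ D.ncard = n}) ⟨_, D, hD, rfl⟩

lemma NoIsolated.two_mul_packNum3_le_pairedDomNum [Finite V] (hG : G.NoIsolated) :
    2 * G.packNum3 ≤ G.pairedDomNum := by
  obtain ⟨P, hP, hPcard⟩ := G.exists_packing3_ncard_eq_packNum3
  obtain ⟨D, hD, hDcard⟩ := hG.exists_pairedDominating_ncard_eq
  exact hPcard ▸ hDcard ▸ hD.two_mul_ncard_le hP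

lemma packNum3_mul_le_packNum3_tensor [Finite V] [Finite W] (G : SimpleGraph V)
    (H : SimpleGraph W) : G.packNum3 * H.packNum3 ≤ (G.tensor H).packNum3 := by
  obtain ⟨P, hP, hPcard⟩ := G.exists_packing3_ncard_eq_packNum3
  obtain ⟨Q, hQ, hQcard⟩ := H.exists_packing3_ncard_eq_packNum3
  rw [← hPcard, ← hQcard, ← Set.ncard_prod]
  exact (hP.prod hQ).ncard_le_packNum3

end

end SimpleGraph

theorem stmt7 {V W : Type*} [Fintype V] [Fintype W] (G : SimpleGraph V) (H : SimpleGraph W)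
    (hG : G.NoIsolated) (hH : H.NoIsolated)
    (hG2 : G.pairedDomNum = 2 * G.packNum3) (hH2 : H.pairedDomNum = 2 * H.packNum3) :
    G.pairedDomNum * H.pairedDomNum ≤ 2 * (G.tensor H).pairedDomNum :=
  calc G.pairedDomNum * H.pairedDomNum = 2 * (2 * (G.packNum3 * H.packNum3)) := by
        rw [hG2, hH2]; ring
    _ ≤ 2 * (2 * (G.tensor H).packNum3) := by
        gcongr; exact packNum3_mul_le_packNum3_tensor G H
    _ ≤ 2 * (G.tensor H).pairedDomNum := by
        gcongr; exact (hG.tensor hH).two_mul_packNum3_le_pairedDomNum
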